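/- For every real μ > 0 and every real x with 0 < x < 1/4, the series λ(μ;x) = Σ_{k=0}^{∞} (μ)_{2k} x^k / ( (μ+1)_k k! ) converges and its sum equals ( (1 − √(1−4x)) / (2x) )^{μ}. Consequently, λ(α;x)·λ(β;x) = λ(α+β;x) for all α, β > 0. -/

import Mathlib

/-!
Let `A(x) = Σ a_k x^k` be `λ(μ;x)` and `B(x) = Σ b_k x^k` with `b_k = (μ + 2k choose k)`. From
`(μ + 2k) a_k = μ b_k` and `(μ + 2k + 2) b_{k+1} = μ a_{k+1} + 4 (μ + 2k + 1) b_k`, both series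
(radius `1/4`) satisfy the first-order system
`μ A + 2x A' = μ B`, `μ B + 2x B' = μ A + 4x ((μ + 1) B + 2x B')`.
For `ε = ±1` and `σ = ε √(1 - 4x)`, the function `(A + σ B) ((1 + σ)/2)^μ` has zero derivative on
`(0, 1/4)` and is continuous at `0`, where it equals `0` for `ε = -1` and `2` for `ε = 1`.
Hence `A = √(1 - 4x) B` and `A ((1 + √(1 - 4x))/2)^μ = 1`, while `(1 + √(1 - 4x))/2` is the
reciprocal of `(1 - √(1 - 4x))/(2x)`.
-/

/-- The rising factorial (Pochhammer symbol) `(μ)_n = μ(μ+1)⋯(μ+n−1)`. -/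
noncomputable def risingFactorial (μ : ℝ) : ℕ → ℝ
  | 0 => 1
  | n + 1 => risingFactorial μ n * (μ + n)

/-- The terms of the hypergeometric series `λ(μ;x) = Σ_k (μ)_{2k} x^k / ((μ+1)_k k!)`. -/
noncomputable def lambdaTerm (μ x : ℝ) (k : ℕ) : ℝ :=
  risingFactorial μ (2 * k) * x ^ k / (risingFactorial (μ + 1) k * (Nat.factorial k : ℝ))

open Filter Topology
open scoped Nat

lemma tendsto_mul_natCast_add_div_natCast_add (a p q : ℝ) :
    Tendsto (fun k : ℕ => (a * k + p) / (k + q)) atTop (𝓝 a) := by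
  have h₁ := (tendsto_natCast_div_add_atTop q).const_mul a
  have h₂ : Tendsto (fun k : ℕ => p / (k + q)) atTop (𝓝 0) :=
    tendsto_const_nhds.div_atTop (tendsto_atTop_add_const_right _ q tendsto_natCast_atTop_atTop)
  simpa [add_div, mul_div_assoc] using h₁.add h₂

section PowerSeries

variable {c : ℕ → ℝ} {R : ℝ}

lemma summable_abs_mul_pow_of_tendsto_ratio {L : ℝ} (hL : 0 < L)
    (hc : Tendsto (fun n => |c (n + 1)| / |c n|) atTop (𝓝 L)) {r : ℝ} (hr : 0 ≤ r)
    (hrL : r < L⁻¹) : Summable fun n => |c n| * r ^ n := by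
  lift L to NNReal using hL.le
  lift r to NNReal using hr
  have hrad := FormalMultilinearSeries.inv_le_ofScalars_radius_of_tendsto ℝ c
    (by exact_mod_cast hL.ne') (by simpa using hc)
  have := (FormalMultilinearSeries.ofScalars ℝ c).summable_norm_mul_pow (r := r)
    (lt_of_lt_of_le (by exact_mod_cast hrL) hrad)
  simpa [FormalMultilinearSeries.ofScalars_norm] using this

lemma summable_natCast_mul_abs_mul_pow (hc : Summable fun k => |c k| * R ^ k) {r : ℝ}
    (hr : 0 ≤ r) (hrR : r < R) : Summable fun k : ℕ => (k : ℝ) * |c k| * r ^ k := by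
  have hR : 0 < R := hr.trans_lt hrR
  have hq : ‖r / R‖ < 1 := by
    rwa [Real.norm_eq_abs, abs_of_nonneg (by positivity), div_lt_one hR]
  refine ((summable_pow_mul_geometric_of_norm_lt_one 1 hq).mul_right
    (∑' j, |c j| * R ^ j)).of_nonneg_of_le (fun k => by positivity) fun k => ?_
  have hle : |c k| * R ^ k ≤ ∑' j, |c j| * R ^ j := hc.le_tsum k fun j _ => by positivity
  calc (k : ℝ) * |c k| * r ^ k = (k : ℝ) ^ 1 * (r / R) ^ k * (|c k| * R ^ k) := by
        rw [div_pow]; field_simp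
    _ ≤ _ := by gcongr

lemma summable_mul_pow_of_abs_lt (hc : ∀ r, 0 ≤ r → r < R → Summable fun k => |c k| * r ^ k)
    {z : ℝ} (hz : |z| < R) : Summable fun k => c k * z ^ k :=
  .of_norm (by simpa [abs_mul, abs_pow] using hc |z| (abs_nonneg z) hz)

lemma summable_natCast_mul_mul_pow (hc : ∀ r, 0 ≤ r → r < R → Summable fun k => |c k| * r ^ k)
    {z : ℝ} (hz : |z| < R) : Summable fun k : ℕ => k * c k * z ^ k := by
  obtain ⟨r, hzr, hrR⟩ := exists_between hz
  refine .of_norm ?_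
  simpa [abs_mul, abs_pow] using
    summable_natCast_mul_abs_mul_pow (hc r ((abs_nonneg z).trans hzr.le) hrR) (abs_nonneg z) hzr

lemma hasDerivAt_tsum_mul_pow (hc : ∀ r, 0 ≤ r → r < R → Summable fun k => |c k| * r ^ k)
    {z : ℝ} (hz : |z| < R) :
    HasDerivAt (fun y => ∑' k, c k * y ^ k) (∑' k, c k * (k * z ^ (k - 1))) z := by
  obtain ⟨r, hzr, hrR⟩ := exists_between hz
  have hr : 0 < r := (abs_nonneg z).trans_lt hzr
  have hu : Summable fun k : ℕ => (k : ℝ) * |c k| * r ^ k / r :=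
    (summable_natCast_mul_abs_mul_pow (hc ((r + R) / 2) (by linarith) (by linarith)) hr.le
      (by linarith)).div_const r
  refine hasDerivAt_tsum_of_isPreconnected hu isOpen_Ioo isPreconnected_Ioo
    (fun (k : ℕ) y _ => (hasDerivAt_pow k y).const_mul (c k)) (fun k y hy => ?_) (y₀ := 0)
    ⟨by linarith, hr⟩ (summable_mul_pow_of_abs_lt hc (by rw [abs_zero]; exact hr.trans hrR))
    (abs_lt.1 hzr)
  rcases k with _ | k
  · simp
  · have hy : |y| ≤ r := (abs_lt.2 hy).le
    rw [Real.norm_eq_abs, abs_mul, abs_mul, abs_pow, Nat.add_sub_cancel, pow_succ,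
      mul_div_assoc, mul_div_cancel_right₀ _ hr.ne', Nat.abs_cast]
    have : |y| ^ k ≤ r ^ k := pow_le_pow_left₀ (abs_nonneg y) hy k
    have : |c (k + 1)| * ((k + 1 : ℕ) : ℝ) * |y| ^ k ≤ (k + 1 : ℕ) * |c (k + 1)| * r ^ k := by
      rw [mul_comm |c (k + 1)|]; gcongr
    linarith

lemma mul_tsum_mul_natCast_mul_pow_sub_one (c : ℕ → ℝ) (z : ℝ) :
    z * ∑' k, c k * (k * z ^ (k - 1)) = ∑' k, k * c k * z ^ k := by
  rw [← tsum_mul_left]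
  congr 1
  ext (_ | k)
  · simp
  · rw [Nat.add_sub_cancel, pow_succ]; ring

lemma tsum_mul_pow_zero (c : ℕ → ℝ) : ∑' k, c k * (0 : ℝ) ^ k = c 0 := by
  rw [tsum_eq_single 0 fun k hk => by simp [hk]]
  simp

end PowerSeries

lemma risingFactorial_eq_eval (μ : ℝ) : ∀ n, risingFactorial μ n = (ascPochhammer ℝ n).eval μ
  | 0 => by simp [risingFactorial]
  | n + 1 => by rw [risingFactorial, risingFactorial_eq_eval μ n, ascPochhammer_succ_eval]

lemma risingFactorial_pos {μ : ℝ} (hμ : 0 < μ) (n : ℕ) : 0 < risingFactorial μ n := by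
  rw [risingFactorial_eq_eval]; exact ascPochhammer_pos n μ hμ

lemma risingFactorial_succ_left (μ : ℝ) (n : ℕ) :
    risingFactorial μ (n + 1) = μ * risingFactorial (μ + 1) n := by
  simp [risingFactorial_eq_eval, ascPochhammer_succ_left]

lemma risingFactorial_add (μ : ℝ) (m n : ℕ) :
    risingFactorial μ (m + n) = risingFactorial μ m * risingFactorial (μ + m) n := by
  simp [risingFactorial_eq_eval, ← ascPochhammer_mul]

noncomputable def lambdaCoeff (μ : ℝ) (k : ℕ) : ℝ :=
  risingFactorial μ (2 * k) / (risingFactorial (μ + 1) k * k !)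

/-- The generalized central binomial coefficient `(μ + 2k choose k) = (μ + k + 1)_k / k!`. -/
noncomputable def centralBinomCoeff (μ : ℝ) (k : ℕ) : ℝ :=
  risingFactorial (μ + 1 + k) k / k !

lemma lambdaTerm_eq_lambdaCoeff_mul_pow (μ x : ℝ) (k : ℕ) : lambdaTerm μ x k = lambdaCoeff μ k * x ^ k := by
  rw [lambdaTerm, lambdaCoeff]; ring

@[simp] lemma lambdaCoeff_zero (μ : ℝ) : lambdaCoeff μ 0 = 1 := by
  simp [lambdaCoeff, risingFactorial]

@[simp] lemma centralBinomCoeff_zero (μ : ℝ) : centralBinomCoeff μ 0 = 1 := by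
  simp [centralBinomCoeff, risingFactorial]

lemma centralBinomCoeff_pos {μ : ℝ} (hμ : -1 < μ) (k : ℕ) : 0 < centralBinomCoeff μ k :=
  div_pos (risingFactorial_pos (by have := k.cast_nonneg (α := ℝ); linarith) k) (by positivity)

lemma lambdaCoeff_pos {μ : ℝ} (hμ : 0 < μ) (k : ℕ) : 0 < lambdaCoeff μ k := by
  have := risingFactorial_pos hμ (2 * k)
  have := risingFactorial_pos (show 0 < μ + 1 by linarith) k
  rw [lambdaCoeff]; positivity

lemma add_two_mul_mul_lambdaCoeff {μ : ℝ} (hμ : -1 < μ) (k : ℕ) :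
    (μ + 2 * k) * lambdaCoeff μ k = μ * centralBinomCoeff μ k := by
  have h : risingFactorial μ (2 * k) * (μ + 2 * k)
      = μ * (risingFactorial (μ + 1) k * risingFactorial (μ + 1 + k) k) := by
    have h₁ : risingFactorial μ (2 * k + 1) = risingFactorial μ (2 * k) * (μ + (2 * k : ℕ)) := rfl
    have h₂ : risingFactorial (μ + 1) (2 * k)
        = risingFactorial (μ + 1) k * risingFactorial (μ + 1 + k) k := by
      rw [two_mul, risingFactorial_add]
    push_cast at h₁
    rw [← h₂, ← risingFactorial_succ_left, h₁]
  have := risingFactorial_pos (show 0 < μ + 1 by linarith) k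
  rw [lambdaCoeff, centralBinomCoeff]
  field_simp
  linear_combination h

lemma lambdaCoeff_le_centralBinomCoeff {μ : ℝ} (hμ : 0 < μ) (k : ℕ) :
    lambdaCoeff μ k ≤ centralBinomCoeff μ k := by
  have h := add_two_mul_mul_lambdaCoeff (show -1 < μ by linarith) k
  have := k.cast_nonneg (α := ℝ)
  have := centralBinomCoeff_pos (show -1 < μ by linarith) k
  refine le_of_mul_le_mul_left ?_ (show 0 < μ + 2 * k by positivity)
  nlinarith

lemma centralBinomCoeff_succ (μ : ℝ) (k : ℕ) :
    (μ + 1 + k) * (k + 1) * centralBinomCoeff μ (k + 1)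
      = (μ + 2 * k + 1) * (μ + 2 * k + 2) * centralBinomCoeff μ k := by
  have h := risingFactorial_succ_left (μ + 1 + k) (k + 1)
  rw [risingFactorial, risingFactorial] at h
  rw [centralBinomCoeff, centralBinomCoeff, Nat.factorial_succ]
  push_cast at h ⊢
  field_simp
  rw [show μ + 1 + (k + 1) = μ + 1 + k + 1 by ring]
  linear_combination -h

lemma add_two_mul_mul_centralBinomCoeff_succ {μ : ℝ} (hμ : -1 < μ) (k : ℕ) :
    (μ + 2 * (k + 1)) * centralBinomCoeff μ (k + 1)
      = μ * lambdaCoeff μ (k + 1) + 4 * (μ + 2 * k + 1) * centralBinomCoeff μ k := by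
  have h₁ := add_two_mul_mul_lambdaCoeff hμ (k + 1)
  have h₂ := centralBinomCoeff_succ μ k
  have hne : μ + 2 * (k + 1) ≠ 0 := by have := k.cast_nonneg (α := ℝ); intro h; linarith
  apply mul_left_cancel₀ hne
  push_cast at h₁
  linear_combination -μ * h₁ + 4 * h₂

lemma tendsto_centralBinomCoeff_ratio {μ : ℝ} (hμ : -1 < μ) :
    Tendsto (fun k => |centralBinomCoeff μ (k + 1)| / |centralBinomCoeff μ k|) atTop (𝓝 4) := by
  have h := (tendsto_mul_natCast_add_div_natCast_add 2 (μ + 1) 1).mul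
    (tendsto_mul_natCast_add_div_natCast_add 2 (μ + 2) (μ + 1))
  norm_num at h
  refine h.congr fun k => ?_
  have := k.cast_nonneg (α := ℝ)
  have hb := centralBinomCoeff_pos hμ k
  rw [abs_of_pos hb, abs_of_pos (centralBinomCoeff_pos hμ (k + 1)), eq_div_iff hb.ne',
    div_mul_div_comm, div_mul_eq_mul_div, div_eq_iff (by nlinarith)]
  linear_combination (centralBinomCoeff_succ μ k).symm

lemma summable_abs_centralBinomCoeff_mul_pow {μ : ℝ} (hμ : -1 < μ) :
    ∀ r, 0 ≤ r → r < 1 / 4 → Summable fun k => |centralBinomCoeff μ k| * r ^ k :=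
  fun _ hr hr4 => summable_abs_mul_pow_of_tendsto_ratio (by norm_num)
    (tendsto_centralBinomCoeff_ratio hμ) hr (by norm_num at hr4 ⊢; exact hr4)

lemma summable_abs_lambdaCoeff_mul_pow {μ : ℝ} (hμ : 0 < μ) :
    ∀ r, 0 ≤ r → r < 1 / 4 → Summable fun k => |lambdaCoeff μ k| * r ^ k := fun r hr hr4 =>
  (summable_abs_centralBinomCoeff_mul_pow (show -1 < μ by linarith) r hr hr4).of_nonneg_of_le
    (fun _ => by positivity) fun k => by
      rw [abs_of_pos (lambdaCoeff_pos hμ k),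
        abs_of_pos (centralBinomCoeff_pos (by linarith) k)]
      exact mul_le_mul_of_nonneg_right (lambdaCoeff_le_centralBinomCoeff hμ k) (pow_nonneg hr k)

noncomputable def lambdaSeries (μ y : ℝ) : ℝ := ∑' k, lambdaCoeff μ k * y ^ k

noncomputable def centralBinomSeries (μ y : ℝ) : ℝ := ∑' k, centralBinomCoeff μ k * y ^ k

lemma lambdaSeries_euler {μ z : ℝ} (hμ : 0 < μ) (hz : |z| < 1 / 4) :
    μ * lambdaSeries μ z + 2 * ∑' k : ℕ, k * lambdaCoeff μ k * z ^ k
      = μ * centralBinomSeries μ z := by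
  have hs := summable_abs_lambdaCoeff_mul_pow hμ
  rw [lambdaSeries, centralBinomSeries, ← tsum_mul_left, ← tsum_mul_left, ← tsum_mul_left,
    ← ((summable_mul_pow_of_abs_lt hs hz).mul_left μ).tsum_add
      ((summable_natCast_mul_mul_pow hs hz).mul_left 2)]
  congr 1; ext k
  linear_combination z ^ k * add_two_mul_mul_lambdaCoeff (show -1 < μ by linarith) k

lemma centralBinomSeries_euler {μ z : ℝ} (hμ : 0 < μ) (hz : |z| < 1 / 4) :
    μ * centralBinomSeries μ z + 2 * ∑' k : ℕ, k * centralBinomCoeff μ k * z ^ k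
      = μ * lambdaSeries μ z
        + 4 * z * ((μ + 1) * centralBinomSeries μ z
          + 2 * ∑' k : ℕ, k * centralBinomCoeff μ k * z ^ k) := by
  have hsA := summable_abs_lambdaCoeff_mul_pow hμ
  have hsB := summable_abs_centralBinomCoeff_mul_pow (show -1 < μ by linarith)
  have hA := (summable_mul_pow_of_abs_lt hsA hz).hasSum
  have hB := (summable_mul_pow_of_abs_lt hsB hz).hasSum
  have hθB := (summable_natCast_mul_mul_pow hsB hz).hasSum
  have hg := ((hB.mul_left μ).add (hθB.mul_left 2)).sub (hA.mul_left μ)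
  have hshift := ((hB.mul_left (μ + 1)).add (hθB.mul_left 2)).mul_left (4 * z)
  rw [← hasSum_nat_add_iff' 1] at hg
  simp only [Finset.sum_range_one, Nat.cast_zero, pow_zero, lambdaCoeff_zero,
    centralBinomCoeff_zero, mul_one, mul_zero, add_zero, sub_self, sub_zero] at hg
  rw [lambdaSeries, centralBinomSeries]
  refine eq_add_of_sub_eq' (hg.unique (hshift.congr_fun fun k => ?_))
  have := add_two_mul_mul_centralBinomCoeff_succ (show -1 < μ by linarith) k
  push_cast
  linear_combination z ^ (k + 1) * this

lemma lambdaSeries_zero (μ : ℝ) : lambdaSeries μ 0 = 1 := by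
  rw [lambdaSeries, tsum_mul_pow_zero, lambdaCoeff_zero]

lemma centralBinomSeries_zero (μ : ℝ) : centralBinomSeries μ 0 = 1 := by
  rw [centralBinomSeries, tsum_mul_pow_zero, centralBinomCoeff_zero]

noncomputable def firstIntegral (μ ε y : ℝ) : ℝ :=
  (lambdaSeries μ y + ε * √(1 - 4 * y) * centralBinomSeries μ y)
    * ((1 + ε * √(1 - 4 * y)) / 2) ^ μ

lemma hasDerivAt_firstIntegral {μ ε z : ℝ} (hμ : 0 < μ) (hε : ε ^ 2 = 1) (hz : 0 < z)
    (hz4 : z < 1 / 4) : HasDerivAt (firstIntegral μ ε) 0 z := by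
  have hzR : |z| < 1 / 4 := by rwa [abs_of_pos hz]
  have h4z : 0 < 1 - 4 * z := by linarith
  set s := √(1 - 4 * z) with hs_def
  have hs0 : 0 < s := Real.sqrt_pos.2 h4z
  have hs : s ^ 2 = 1 - 4 * z := Real.sq_sqrt h4z.le
  have hτ : 0 < (1 + ε * s) / 2 := by nlinarith
  have hsA := summable_abs_lambdaCoeff_mul_pow hμ
  have hsB := summable_abs_centralBinomCoeff_mul_pow (show -1 < μ by linarith)
  have hA := hasDerivAt_tsum_mul_pow hsA hzR
  have hB := hasDerivAt_tsum_mul_pow hsB hzR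
  have hσ : HasDerivAt (fun y => ε * √(1 - 4 * y)) (ε * (-4 / (2 * s))) z := by
    have := (((hasDerivAt_id z).const_mul 4).const_sub 1).sqrt h4z.ne'
    simpa using this.const_mul ε
  have hτd := ((hσ.const_add 1).div_const 2).rpow_const (p := μ) (Or.inl hτ.ne')
  refine ((hA.add (hσ.mul hB)).mul hτd).congr_deriv ?_
  simp only [Pi.add_apply, Pi.mul_apply, ← hs_def, Real.rpow_sub_one hτ.ne']
  have hE₁ := lambdaSeries_euler hμ hzR
  have hE₂ := centralBinomSeries_euler hμ hzR
  rw [← mul_tsum_mul_natCast_mul_pow_sub_one] at hE₁ hE₂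
  rw [lambdaSeries, centralBinomSeries] at hE₁ hE₂
  set A := ∑' k : ℕ, lambdaCoeff μ k * z ^ k
  set B := ∑' k : ℕ, centralBinomCoeff μ k * z ^ k
  set DA := ∑' k : ℕ, lambdaCoeff μ k * (k * z ^ (k - 1))
  set DB := ∑' k : ℕ, centralBinomCoeff μ k * (k * z ^ (k - 1))
  set T := ((1 + ε * s) / 2) ^ μ
  have hK : (s * DA - 2 * ε * B + ε * s ^ 2 * DB) * (1 + ε * s) - 2 * ε * μ * (A + ε * s * B)
      = 0 := by
    have : 2 * z * ((s * DA - 2 * ε * B + ε * s ^ 2 * DB) * (1 + ε * s)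
        - 2 * ε * μ * (A + ε * s * B)) = 0 := by
      linear_combination s * (1 + ε * s) * hE₁ + ε * (1 + ε * s) * hE₂
        + (2 * ε * z * DB * (1 + ε * s) + μ * (B - A) * ε) * hs - μ * (B - A) * s * hε
    exact (mul_eq_zero.1 this).resolve_left (by positivity)
  have hτ' : 1 + ε * s ≠ 0 := by linarith
  field_simp
  linear_combination 2 * T * hK

lemma firstIntegral_zero (μ ε : ℝ) : firstIntegral μ ε 0 = (1 + ε) * ((1 + ε) / 2) ^ μ := by
  simp [firstIntegral, lambdaSeries_zero, centralBinomSeries_zero]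

lemma continuousAt_firstIntegral {μ ε y : ℝ} (hμ : 0 < μ) (hy : |y| < 1 / 4) :
    ContinuousAt (firstIntegral μ ε) y := by
  have hA := (hasDerivAt_tsum_mul_pow (summable_abs_lambdaCoeff_mul_pow hμ) hy).continuousAt
  have hB := (hasDerivAt_tsum_mul_pow
    (summable_abs_centralBinomCoeff_mul_pow (show -1 < μ by linarith)) hy).continuousAt
  have hσ : ContinuousAt (fun y : ℝ => ε * √(1 - 4 * y)) y := by fun_prop
  exact (hA.add (hσ.mul hB)).mul
    (((hσ.const_add 1).div_const 2).rpow_const (Or.inr hμ.le))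

lemma firstIntegral_eq_firstIntegral_zero {μ ε x : ℝ} (hμ : 0 < μ) (hε : ε ^ 2 = 1)
    (hx : 0 < x) (hx4 : x < 1 / 4) : firstIntegral μ ε x = firstIntegral μ ε 0 := by
  obtain ⟨c, -, hc⟩ := exists_hasDerivAt_eq_slope (firstIntegral μ ε) (fun _ => 0) hx
    (fun y hy => (continuousAt_firstIntegral hμ
      (by rw [abs_of_nonneg hy.1]; linarith [hy.2])).continuousWithinAt)
    (fun y hy => hasDerivAt_firstIntegral hμ hε hy.1 (by linarith [hy.2]))
  rw [eq_comm, div_eq_zero_iff, sub_eq_zero] at hc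
  exact hc.resolve_right (by linarith)

theorem hasSum_lambdaTerm {μ x : ℝ} (hμ : 0 < μ) (hx : 0 < x) (hx4 : x < 1 / 4) :
    HasSum (lambdaTerm μ x) (((1 - √(1 - 4 * x)) / (2 * x)) ^ μ) := by
  have hxR : |x| < 1 / 4 := by rwa [abs_of_pos hx]
  have hsum : HasSum (lambdaTerm μ x) (lambdaSeries μ x) := by
    rw [show lambdaTerm μ x = _ from funext (lambdaTerm_eq_lambdaCoeff_mul_pow μ x)]
    exact (summable_mul_pow_of_abs_lt (summable_abs_lambdaCoeff_mul_pow hμ) hxR).hasSum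
  have hΦ : firstIntegral μ (-1) x = 0 := by
    rw [firstIntegral_eq_firstIntegral_zero hμ (by norm_num) hx hx4, firstIntegral_zero]
    norm_num
  have hΨ : firstIntegral μ 1 x = 2 := by
    rw [firstIntegral_eq_firstIntegral_zero hμ (by norm_num) hx hx4, firstIntegral_zero]
    norm_num
  rw [firstIntegral] at hΦ hΨ
  simp only [one_mul, neg_one_mul, ← sub_eq_add_neg] at hΦ hΨ
  have h4x : 0 < 1 - 4 * x := by linarith
  set s := √(1 - 4 * x)
  have hs : s ^ 2 = 1 - 4 * x := Real.sq_sqrt h4x.le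
  have hs0 : 0 ≤ s := Real.sqrt_nonneg _
  have hs1 : s < 1 := by nlinarith
  have hAB : lambdaSeries μ x = s * centralBinomSeries μ x := by
    have := (mul_eq_zero.1 hΦ).resolve_right (Real.rpow_pos_of_pos (by linarith) μ).ne'
    linarith
  have hinv : (1 - s) / (2 * x) = ((1 + s) / 2)⁻¹ := by
    rw [inv_div, div_eq_div_iff (by positivity) (by positivity)]
    linear_combination -hs
  rw [hinv, Real.inv_rpow (by positivity), ← eq_inv_of_mul_eq_one_left (a := lambdaSeries μ x)]
  · exact hsum
  · rw [hAB] at hΨ ⊢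
    linear_combination hΨ / 2

theorem stmt_13 (x : ℝ) (hx0 : 0 < x) (hx1 : x < 1 / 4) :
    (∀ μ : ℝ, 0 < μ →
      HasSum (lambdaTerm μ x) (((1 - Real.sqrt (1 - 4 * x)) / (2 * x)) ^ μ)) ∧
    (∀ α β : ℝ, 0 < α → 0 < β →
      (∑' k : ℕ, lambdaTerm α x k) * (∑' k : ℕ, lambdaTerm β x k)
        = ∑' k : ℕ, lambdaTerm (α + β) x k) := by
  have hC : 0 < (1 - √(1 - 4 * x)) / (2 * x) :=
    div_pos (sub_pos.2 ((Real.sqrt_lt' one_pos).2 (by linarith))) (by positivity)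
  refine ⟨fun μ hμ => hasSum_lambdaTerm hμ hx0 hx1, fun α β hα hβ => ?_⟩
  rw [(hasSum_lambdaTerm hα hx0 hx1).tsum_eq, (hasSum_lambdaTerm hβ hx0 hx1).tsum_eq,
    (hasSum_lambdaTerm (add_pos hα hβ) hx0 hx1).tsum_eq, Real.rpow_add hC]
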